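/- Let C be an antimonotone CNF formula (a conjunction of clauses, each clause a disjunction of negative literals) over n variables, such that every clause contains at least two distinct literals, and every variable occurs (as a literal) in at most d clauses. Then C has a satisfying assignment in which at least n/(2d+1) variables are assigned true. -/
import Mathlib


/-- An antimonotone CNF formula over `n` variables in which every
clause contains at least two distinct (negative) literals and every variable
occurs in at most `d` clauses has a satisfying assignment assigning `true` to
at least `n / (2d+1)` variables.  A clause is the set of variables occurring
negated in it; an assignment satisfies a clause iff it sets some variable of
the clause to `false`. -/
theorem antimonotone_cnf_heavy_assignment (n d : ℕ)
    (clauses : Finset (Finset (Fin n)))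
    (hsize : ∀ c ∈ clauses, 2 ≤ c.card)
    (hocc : ∀ v : Fin n, (clauses.filter (fun c => v ∈ c)).card ≤ d) :
    ∃ τ : Fin n → Bool,
      (∀ c ∈ clauses, ∃ v ∈ c, τ v = false) ∧
      n ≤ (2 * d + 1) * (Finset.univ.filter (fun v => τ v = true)).card := by
  classical
  rcases Nat.eq_zero_or_pos n with hn | hn
  · refine ⟨fun _ => true, ?_, ?_⟩
    · intro c hc
      have h2 := hsize c hc
      have hcn : c.card ≤ n := by
        simpa using Finset.card_le_card (Finset.subset_univ c)
      omega
    · omega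
  obtain ⟨v0⟩ : Nonempty (Fin n) := ⟨⟨0, hn⟩⟩
  -- choose two distinct representatives for each clause
  have hpair : ∀ c : Finset (Fin n), ∃ p : Fin n × Fin n,
      c ∈ clauses → p.1 ∈ c ∧ p.2 ∈ c ∧ p.1 ≠ p.2 := by
    intro c
    by_cases hc : c ∈ clauses
    · obtain ⟨a, ha, b, hb, hab⟩ := Finset.one_lt_card.mp (hsize c hc)
      exact ⟨(a, b), fun _ => ⟨ha, hb, hab⟩⟩
    · exact ⟨(v0, v0), fun h => absurd h hc⟩
  choose p hp using hpair
  set partners : Fin n → Finset (Fin n) :=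
    fun v => (clauses.filter (fun c => v ∈ c)).biUnion (fun c => {(p c).1, (p c).2}) with hpartners
  have hpartners_card : ∀ v, (partners v).card ≤ d * 2 := by
    intro v
    calc (partners v).card ≤ (clauses.filter (fun c => v ∈ c)).card * 2 :=
          Finset.card_biUnion_le_card_mul _ _ 2 (fun c _ => by
            simpa using Finset.card_insert_le (p c).1 {(p c).2})
      _ ≤ d * 2 := Nat.mul_le_mul_right 2 (hocc v)
  have key : ∀ m : ℕ, ∀ U : Finset (Fin n), U.card ≤ m →
      ∃ S : Finset (Fin n), S ⊆ U ∧ U.card ≤ (2 * d + 1) * S.card ∧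
        ∀ c ∈ clauses, ¬((p c).1 ∈ S ∧ (p c).2 ∈ S) := by
    intro m
    induction m with
    | zero =>
      intro U hU
      refine ⟨∅, Finset.empty_subset _, ?_, by simp⟩
      simpa using hU
    | succ m ih =>
      intro U hU
      rcases U.eq_empty_or_nonempty with rfl | ⟨v, hv⟩
      · exact ⟨∅, Finset.empty_subset _, by simp, by simp⟩
      set D : Finset (Fin n) := insert v (partners v) with hD
      set U' : Finset (Fin n) := U \ D with hU'
      have hvD : v ∈ D := Finset.mem_insert_self _ _
      have hU'ss : U' ⊆ U := Finset.sdiff_subset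
      have hU'card : U'.card ≤ m := by
        have hlt : U'.card < U.card := Finset.card_lt_card (by
          constructor
          · exact hU'ss
          · intro hsub
            exact (Finset.mem_sdiff.mp (hsub hv)).2 hvD)
        omega
      obtain ⟨S', hSsub, hScard, hSprop⟩ := ih U' hU'card
      have hvS' : v ∉ S' := fun h => (Finset.mem_sdiff.mp (hSsub h)).2 hvD
      refine ⟨insert v S', ?_, ?_, ?_⟩
      · intro x hx
        rcases Finset.mem_insert.mp hx with rfl | hx
        · exact hv
        · exact hU'ss (hSsub hx)
      · have hUsub : U ⊆ U' ∪ D := by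
          intro x hx
          by_cases hxD : x ∈ D
          · exact Finset.mem_union_right _ hxD
          · exact Finset.mem_union_left _ (Finset.mem_sdiff.mpr ⟨hx, hxD⟩)
        have hDcard : D.card ≤ 2 * d + 1 := by
          have h1 : D.card ≤ (partners v).card + 1 := by
            rw [hD]; exact Finset.card_insert_le _ _
          have h2 := hpartners_card v
          omega
        calc U.card ≤ (U' ∪ D).card := Finset.card_le_card hUsub
          _ ≤ U'.card + D.card := Finset.card_union_le _ _
          _ ≤ (2 * d + 1) * S'.card + (2 * d + 1) := by omega
          _ = (2 * d + 1) * (insert v S').card := by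
              rw [Finset.card_insert_of_notMem hvS']; ring
      · intro c hc ⟨h1, h2⟩
        obtain ⟨hc1, hc2, hcne⟩ := hp c hc
        have hmem : ∀ w ∈ c, {(p c).1, (p c).2} ⊆ partners w := by
          intro w hw
          rw [hpartners]
          intro x hx
          exact Finset.mem_biUnion.mpr ⟨c, Finset.mem_filter.mpr ⟨hc, hw⟩, hx⟩
        rcases Finset.mem_insert.mp h1 with rfl | h1
        · rcases Finset.mem_insert.mp h2 with h2' | h2
          · exact hcne h2'.symm
          · have : (p c).2 ∈ partners (p c).1 :=
              hmem _ hc1 (Finset.mem_insert_of_mem (Finset.mem_singleton_self _))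
            exact (Finset.mem_sdiff.mp (hSsub h2)).2 (Finset.mem_insert_of_mem this)
        · rcases Finset.mem_insert.mp h2 with h2' | h2
          · have hpart : (p c).1 ∈ partners (p c).2 :=
              hmem _ hc2 (Finset.mem_insert_self _ _)
            rw [h2'] at hpart
            exact (Finset.mem_sdiff.mp (hSsub h1)).2 (Finset.mem_insert_of_mem hpart)
          · exact hSprop c hc ⟨h1, h2⟩
  obtain ⟨S, _, hcard, hprop⟩ := key (Finset.univ.card) Finset.univ le_rfl
  refine ⟨fun v => decide (v ∈ S), ?_, ?_⟩
  · intro c hc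
    obtain ⟨hc1, hc2, _⟩ := hp c hc
    have := hprop c hc
    by_cases h1 : (p c).1 ∈ S
    · have h2 : (p c).2 ∉ S := fun h2 => this ⟨h1, h2⟩
      exact ⟨(p c).2, hc2, by simp [h2]⟩
    · exact ⟨(p c).1, hc1, by simp [h1]⟩
  · have : Finset.univ.filter (fun v => decide (v ∈ S) = true) = S := by
      ext x; simp
    rw [this]
    simpa using hcard
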